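/- Let t < 0. For every y ∈ [0, y_t] one has 1/4 − y² − y·cot(ty) ≥ 0 (with the convention that at y = 0 this expression equals 1/4 − 1/t), and v_t(y) = 0 if and only if y = y_t. -/

import Mathlib

/-- For `t < 0`, `f_t(y) := 2y·sin(ty) + cos(ty)`. -/
noncomputable def fMap (t y : ℝ) : ℝ :=
  2 * y * Real.sin (t * y) + Real.cos (t * y)

/-- `v_t(y) := √(1/4 − y² − y·cot(ty))` for `y ≠ 0` and `v_t(0) := √(1/4 − 1/t)`. -/
noncomputable def vMap (t y : ℝ) : ℝ :=
  if y = 0 then Real.sqrt (1 / 4 - 1 / t)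
  else Real.sqrt (1 / 4 - y ^ 2 - y * Real.cot (t * y))

lemma fMap_zero (t : ℝ) : fMap t 0 = 1 := by simp [fMap]

lemma fMap_cont (t : ℝ) : Continuous (fMap t) := by
  unfold fMap; fun_prop

lemma fMap_factor (t y : ℝ) :
    fMap t y + 1 = 2 * Real.cos (t * y / 2) * fMap (t / 2) y := by
  have h : t * y = 2 * (t * y / 2) := by ring
  have h2 : t / 2 * y = t * y / 2 := by ring
  rw [fMap, fMap, h2, h, Real.sin_two_mul, Real.cos_two_mul]
  ring

lemma yt_lt (t yt : ℝ) (ht : t < 0)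
    (hyt : IsLeast {y : ℝ | 0 < y ∧ fMap t y = -1} yt) :
    yt < Real.pi / (-t) := by
  have hT : (0:ℝ) < -t := by linarith
  have hπ : (0:ℝ) < Real.pi := Real.pi_pos
  have hend : (0:ℝ) ≤ Real.pi / (-t) := by positivity
  -- value of fMap (t/2) at π/(-t)
  have harg : t / 2 * (Real.pi / (-t)) = -(Real.pi / 2) := by
    have ht' : t ≠ 0 := ht.ne
    field_simp
  have hval : fMap (t/2) (Real.pi / (-t)) = -(2 * (Real.pi / (-t))) := by
    rw [fMap, harg]
    simp [Real.sin_pi_div_two, Real.cos_pi_div_two]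
  have hivt : (0:ℝ) ∈ Set.Icc (fMap (t/2) (Real.pi / (-t))) (fMap (t/2) 0) := by
    rw [hval, fMap_zero]
    constructor
    · have : (0:ℝ) < Real.pi / (-t) := by positivity
      linarith
    · norm_num
  obtain ⟨y0, hy0mem, hy0⟩ := intermediate_value_Icc' hend ((fMap_cont (t/2)).continuousOn) hivt
  have hy0ne0 : y0 ≠ 0 := by
    intro h; rw [h, fMap_zero] at hy0; norm_num at hy0
  have hy0pos : 0 < y0 := lt_of_le_of_ne hy0mem.1 (Ne.symm hy0ne0)
  have hy0ne : y0 ≠ Real.pi / (-t) := by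
    intro h
    rw [h, hval] at hy0
    have : (0:ℝ) < Real.pi / (-t) := by positivity
    linarith
  have hy0lt : y0 < Real.pi / (-t) := lt_of_le_of_ne hy0mem.2 hy0ne
  have hf : fMap t y0 = -1 := by
    have := fMap_factor t y0
    rw [hy0] at this
    linarith
  exact lt_of_le_of_lt (hyt.2 ⟨hy0pos, hf⟩) hy0lt


/-- let `t < 0` and `y_t` the smallest positive zero of `f_t + 1`. For every
`y ∈ [0, y_t]` one has `1/4 − y² − y·cot(ty) ≥ 0` (with the convention that at `y = 0`
this expression equals `1/4 − 1/t`), and `v_t(y) = 0` iff `y = y_t`. -/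
theorem vMap_nonneg_and_eq_zero_iff (t yt : ℝ) (ht : t < 0)
    (hyt : IsLeast {y : ℝ | 0 < y ∧ fMap t y = -1} yt) :
    ∀ y ∈ Set.Icc (0 : ℝ) yt,
      (0 ≤ if y = 0 then 1 / 4 - 1 / t else 1 / 4 - y ^ 2 - y * Real.cot (t * y)) ∧
      (vMap t y = 0 ↔ y = yt) := by
  obtain ⟨⟨hytpos, hytf⟩, hmin⟩ := hyt
  have hlt := yt_lt t yt ht ⟨⟨hytpos, hytf⟩, hmin⟩
  intro y hy
  obtain ⟨hy0, hy1⟩ := hy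
  by_cases hy' : y = 0
  · subst hy'
    have h1t : 1 / t < 0 := by exact one_div_neg.mpr ht
    have hpos : 0 < 1 / 4 - 1 / t := by linarith
    refine ⟨by simpa using hpos.le, ?_⟩
    constructor
    · intro h
      exfalso
      rw [vMap, if_pos rfl, Real.sqrt_eq_zero'] at h
      linarith
    · intro h; exact absurd h.symm (ne_of_gt hytpos)
  · -- y > 0
    have hypos : 0 < y := lt_of_le_of_ne hy0 (Ne.symm hy')
    -- t*y ∈ (-π, 0)
    have hu_neg : t * y < 0 := mul_neg_of_neg_of_pos ht hypos
    have hu_gt : -Real.pi < t * y := by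
      have h1 : y < Real.pi / (-t) := lt_of_le_of_lt hy1 hlt
      have hT : (0:ℝ) < -t := by linarith
      have h2 : y * (-t) < Real.pi := (lt_div_iff₀ hT).mp h1
      nlinarith
    have hsin_neg : Real.sin (t * y) < 0 := by
      have : 0 < Real.sin (-(t*y)) :=
        Real.sin_pos_of_pos_of_lt_pi (by linarith) (by linarith)
      rw [Real.sin_neg] at this; linarith
    have hs := hsin_neg.ne
    -- f y ≥ -1
    have hfge : -1 ≤ fMap t y := by
      by_contra hcon
      push_neg at hcon
      have hivt : (-1:ℝ) ∈ Set.Icc (fMap t y) (fMap t 0) := by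
        rw [fMap_zero]; exact ⟨hcon.le, by norm_num⟩
      obtain ⟨z, hzmem, hz⟩ := intermediate_value_Icc' hy0 ((fMap_cont t).continuousOn) hivt
      have hzne0 : z ≠ 0 := by intro h; rw [h, fMap_zero] at hz; norm_num at hz
      have hzpos : 0 < z := lt_of_le_of_ne hzmem.1 (Ne.symm hzne0)
      have : yt ≤ z := hmin ⟨hzpos, hz⟩
      have : fMap t y = -1 := by
        have : z = y := le_antisymm hzmem.2 (le_trans hy1 this)
        rw [← this]; exact hz
      linarith
    -- f y < 1
    have hflt : fMap t y < 1 := by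
      rw [fMap]
      have h1 : Real.cos (t * y) ≤ 1 := Real.cos_le_one _
      nlinarith [hsin_neg, hypos]
    -- key identity
    have hE : 1 / 4 - y ^ 2 - y * Real.cot (t * y)
        = (1 - fMap t y) * (1 + fMap t y) / (4 * Real.sin (t * y) ^ 2) := by
      rw [Real.cot_eq_cos_div_sin, fMap]
      have hpyth := Real.sin_sq_add_cos_sq (t * y)
      have hsq' : 0 < 4 * Real.sin (t * y) ^ 2 := by positivity
      rw [eq_div_iff hsq'.ne']
      have hc : y * (Real.cos (t * y) / Real.sin (t * y)) * (4 * Real.sin (t * y) ^ 2)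
          = 4 * y * Real.cos (t * y) * Real.sin (t * y) := by
        field_simp
      rw [sub_mul, hc]
      linear_combination hpyth
    have hsq : 0 < 4 * Real.sin (t * y) ^ 2 := by positivity
    have hEnn : 0 ≤ 1 / 4 - y ^ 2 - y * Real.cot (t * y) := by
      rw [hE]
      apply div_nonneg _ hsq.le
      nlinarith
    have hiff : (1 / 4 - y ^ 2 - y * Real.cot (t * y) = 0) ↔ y = yt := by
      constructor
      · intro h
        rw [hE] at h
        have hnum : (1 - fMap t y) * (1 + fMap t y) = 0 :=
          (div_eq_zero_iff.mp h).resolve_right hsq.ne'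
        have : 1 + fMap t y = 0 := by
          rcases mul_eq_zero.mp hnum with h' | h'
          · linarith
          · exact h'
        have hfy : fMap t y = -1 := by linarith
        exact le_antisymm hy1 (hmin ⟨hypos, hfy⟩)
      · intro h
        subst h
        rw [hE, hytf]
        simp
    refine ⟨by rw [if_neg hy']; exact hEnn, ?_⟩
    rw [vMap, if_neg hy', Real.sqrt_eq_zero']
    constructor
    · intro h; exact hiff.mp (le_antisymm h hEnn)
    · intro h; exact le_of_eq (hiff.mpr h)
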